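/- arXiv:1605.01513 — 5 statements merged into one kernel-verified Lean document; each statement's English description precedes it below -/
import Mathlib

section
/- Let n ≥ 3 be odd. A function f : ℝ^N → ℝ has a Taylor expansion of order n at a point x if and only if it has a Taylor expansion of order n−1 at x and both ∂^n f(x) and ∂_+^n f(x) are nonempty. In this case ∂^n f(x) = ∂_+^n f(x) = {P_x^n}, the n-homogeneous part of the Taylor expansion of order n of f at x. -/
open Filter Topology Finset

noncomputable section

/-- ℝ^N with the Euclidean norm. -/
abbrev Euc (N : ℕ) := EuclideanSpace ℝ (Fin N)

/-- `P : ℝ^N → F` is a `k`-homogeneous polynomial, i.e. the restriction to the diagonal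
of a continuous `k`-multilinear map. -/
def IsHomogPoly {N : ℕ} {F : Type*} [NormedAddCommGroup F] [NormedSpace ℝ F]
    (k : ℕ) (P : Euc N → F) : Prop :=
  ∃ M : ContinuousMultilinearMap ℝ (fun _ : Fin k => Euc N) F, ∀ v, P v = M (fun _ => v)

/-- `f` has a Taylor expansion of order `n` at `x`, with `k`-homogeneous parts `P k`. -/
def HasTaylorExpansion {N : ℕ} {F : Type*} [NormedAddCommGroup F] [NormedSpace ℝ F]
    (f : Euc N → F) (x : Euc N) (P : ℕ → Euc N → F) (n : ℕ) : Prop :=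
  (∀ k ∈ Finset.Icc 1 n, IsHomogPoly k (P k)) ∧
  Tendsto (fun h => ‖f (x + h) - f x - ∑ k ∈ Finset.Icc 1 n, P k h‖ / ‖h‖ ^ n)
    (𝓝[≠] (0 : Euc N)) (𝓝 0)

/-- `Q ∈ ∂ⁿ f(x)`: `Q` is an `n`-homogeneous polynomial with
`liminf_{h→0} (f(x+h) − f(x) − Σ_{k=1}^{n-1} P_k(h) − Q(h))/|h|ⁿ ≥ 0`,
where `P k`, `k = 1, …, n-1`, are the homogeneous parts of the Taylor expansion of
order `n-1` of `f` at `x` (`P 1 = Df(x)`). -/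
def SubPoly {N : ℕ} (f : Euc N → ℝ) (x : Euc N) (P : ℕ → Euc N → ℝ) (n : ℕ)
    (Q : Euc N → ℝ) : Prop :=
  IsHomogPoly n Q ∧ ∀ ε > (0 : ℝ), ∀ᶠ h in 𝓝[≠] (0 : Euc N),
    -ε ≤ (f (x + h) - f x - ∑ k ∈ Finset.Icc 1 (n - 1), P k h - Q h) / ‖h‖ ^ n

/-- `Q ∈ ∂₊ⁿ f(x)`: the superdifferential condition
`limsup_{h→0} (f(x+h) − f(x) − Σ_{k=1}^{n-1} P_k(h) − Q(h))/|h|ⁿ ≤ 0`. -/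
def SupPoly {N : ℕ} (f : Euc N → ℝ) (x : Euc N) (P : ℕ → Euc N → ℝ) (n : ℕ)
    (Q : Euc N → ℝ) : Prop :=
  IsHomogPoly n Q ∧ ∀ ε > (0 : ℝ), ∀ᶠ h in 𝓝[≠] (0 : Euc N),
    (f (x + h) - f x - ∑ k ∈ Finset.Icc 1 (n - 1), P k h - Q h) / ‖h‖ ^ n ≤ ε

/-! The heart of the matter is that for odd `n` the two one-sided conditions pin down the same
polynomial. If `Q₁ ∈ ∂ⁿf(x)` and `Q₂ ∈ ∂₊ⁿf(x)`, subtracting the two bounds gives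
`liminf_{h→0} (Q₂ - Q₁)(h) / ‖h‖ⁿ ≥ 0`; this quotient is constant along open rays from `0`, so
`Q₂ - Q₁ ≥ 0` everywhere, and a nonnegative homogeneous polynomial of odd degree vanishes.
For a common element `Q` of both sets the two one-sided bounds say that `Q` is the `n`-th term of
an expansion of order `n` extending the given one of order `n - 1`. Conversely, the `n`-th term
of an expansion of order `n` lies in both sets, and dropping it, being `O(‖h‖ⁿ) = o(‖h‖ⁿ⁻¹)`,
leaves an expansion of order `n - 1`. -/

namespace IsHomogPoly

variable {N n : ℕ} {F : Type*} [NormedAddCommGroup F] [NormedSpace ℝ F] {P Q : Euc N → F}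

lemma map_smul (hP : IsHomogPoly n P) (t : ℝ) (v : Euc N) : P (t • v) = t ^ n • P v := by
  obtain ⟨M, hM⟩ := hP
  simpa [hM] using M.map_smul_univ (fun _ => t) (fun _ => v)

lemma map_neg (hP : IsHomogPoly n P) (hodd : Odd n) (v : Euc N) : P (-v) = -P v := by
  rw [← neg_one_smul ℝ v, hP.map_smul, hodd.neg_one_pow, neg_one_smul]

lemma sub (hP : IsHomogPoly n P) (hQ : IsHomogPoly n Q) : IsHomogPoly n (P - Q) := by
  obtain ⟨M, hM⟩ := hP
  obtain ⟨M', hM'⟩ := hQ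
  exact ⟨M - M', fun v => by simp [hM, hM']⟩

lemma isBigO (hP : IsHomogPoly n P) (l : Filter (Euc N)) : P =O[l] fun h => ‖h‖ ^ n := by
  obtain ⟨M, hM⟩ := hP
  refine .of_bound ‖M‖ (.of_forall fun h => ?_)
  simpa [hM] using M.le_opNorm fun _ => h

variable {D : Euc N → ℝ}

lemma div_norm_pow_smul (hD : IsHomogPoly n D) {t : ℝ} (ht : 0 < t) (v : Euc N) :
    D (t • v) / ‖t • v‖ ^ n = D v / ‖v‖ ^ n := by
  rw [hD.map_smul, smul_eq_mul, norm_smul, Real.norm_of_nonneg ht.le, mul_pow,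
    mul_div_mul_left _ _ (pow_pos ht n).ne']

lemma nonneg_of_eventually_ge (hD : IsHomogPoly n D)
    (hev : ∀ ε > (0 : ℝ), ∀ᶠ h in 𝓝[≠] (0 : Euc N), -ε ≤ D h / ‖h‖ ^ n)
    {v : Euc N} (hv : v ≠ 0) : 0 ≤ D v := by
  have hray : Tendsto (fun t : ℝ => t • v) (𝓝[>] 0) (𝓝[≠] 0) := by
    refine tendsto_nhdsWithin_of_tendsto_nhds_of_eventually_within _ ?_ ?_
    · exact ((continuous_id.smul continuous_const).tendsto' (0 : ℝ) 0 (zero_smul ℝ v)).mono_left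
        nhdsWithin_le_nhds
    · filter_upwards [self_mem_nhdsWithin] with t (ht : 0 < t)
      exact smul_ne_zero ht.ne' hv
  have hbound : ∀ ε > (0 : ℝ), -ε ≤ D v / ‖v‖ ^ n := fun ε hε => by
    obtain ⟨t, hle, ht⟩ := ((hray.eventually (hev ε hε)).and self_mem_nhdsWithin).exists
    rwa [hD.div_norm_pow_smul ht] at hle
  have hquot : 0 ≤ D v / ‖v‖ ^ n := le_of_forall_pos_le_add fun ε hε => by linarith [hbound ε hε]
  simpa using (le_div_iff₀ (pow_pos (norm_pos_iff.mpr hv) n)).mp hquot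

lemma eq_zero_of_odd (hD : IsHomogPoly n D) (hodd : Odd n) (hnonneg : ∀ v ≠ 0, 0 ≤ D v) :
    D = 0 := by
  funext v
  rw [Pi.zero_apply]
  rcases eq_or_ne v 0 with rfl | hv
  · linarith [neg_zero (G := Euc N) ▸ hD.map_neg hodd 0]
  · linarith [hnonneg v hv, hD.map_neg hodd v ▸ hnonneg (-v) (neg_ne_zero.mpr hv)]

end IsHomogPoly

lemma tendsto_norm_div_zero_iff_forall_eventually {α : Type*} {l : Filter α} {g c : α → ℝ}
    (hc : ∀ a, 0 ≤ c a) :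
    Tendsto (fun a => ‖g a‖ / c a) l (𝓝 0) ↔
      (∀ ε > (0 : ℝ), ∀ᶠ a in l, -ε ≤ g a / c a) ∧ (∀ ε > (0 : ℝ), ∀ᶠ a in l, g a / c a ≤ ε) := by
  have hnorm : (fun a => ‖g a‖ / c a) = fun a => ‖g a / c a‖ := by
    funext a
    rw [norm_div, Real.norm_of_nonneg (hc a)]
  rw [hnorm, ← tendsto_zero_iff_norm_tendsto_zero (f := fun a => g a / c a), Metric.tendsto_nhds]
  simp only [Real.dist_0_eq_abs]
  constructor
  · intro H
    exact ⟨fun ε hε => (H ε hε).mono fun a ha => by linarith [(abs_lt.mp ha).1],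
      fun ε hε => (H ε hε).mono fun a ha => by linarith [(abs_lt.mp ha).2]⟩
  · rintro ⟨hlo, hhi⟩ ε hε
    filter_upwards [hlo (ε / 2) (by positivity), hhi (ε / 2) (by positivity)] with a h₁ h₂
    rw [abs_lt]
    constructor <;> linarith

section TaylorExpansion

variable {N m n : ℕ} {F : Type*} [NormedAddCommGroup F] [NormedSpace ℝ F]
  {f : Euc N → F} {x : Euc N} {P : ℕ → Euc N → F}

lemma hasTaylorExpansion_iff_isLittleO :
    HasTaylorExpansion f x P n ↔ (∀ k ∈ Icc 1 n, IsHomogPoly k (P k)) ∧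
      (fun h => f (x + h) - f x - ∑ k ∈ Icc 1 n, P k h) =o[𝓝[≠] 0] fun h => ‖h‖ ^ n := by
  refine and_congr_right fun _ => ?_
  rw [← Asymptotics.isLittleO_norm_left, Asymptotics.isLittleO_iff_tendsto']
  filter_upwards [self_mem_nhdsWithin] with h (hh : h ≠ 0) h0
  exact absurd h0 (pow_pos (norm_pos_iff.mpr hh) n).ne'

lemma HasTaylorExpansion.of_succ (H : HasTaylorExpansion f x P (m + 1)) :
    HasTaylorExpansion f x P m := by
  rw [hasTaylorExpansion_iff_isLittleO] at H ⊢
  obtain ⟨hhom, hrem⟩ := H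
  refine ⟨fun k hk => hhom k (Icc_subset_Icc_right m.le_succ hk), ?_⟩
  have hpow : (fun h : Euc N => ‖h‖ ^ (m + 1)) =o[𝓝[≠] 0] fun h => ‖h‖ ^ m :=
    (Asymptotics.isLittleO_norm_pow_norm_pow m.lt_succ_self).mono nhdsWithin_le_nhds
  have htop := ((hhom (m + 1) (by simp)).isBigO _).trans_isLittleO hpow
  refine ((hrem.trans hpow).add htop).congr_left fun h => ?_
  rw [sum_Icc_succ_top (by omega)]
  abel

end TaylorExpansion

section Subdifferential

variable {N m n : ℕ} {f : Euc N → ℝ} {x : Euc N} {P : ℕ → Euc N → ℝ} {Q Q₁ Q₂ : Euc N → ℝ}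

lemma hasTaylorExpansion_succ_iff :
    HasTaylorExpansion f x P (m + 1) ↔ (∀ k ∈ Icc 1 m, IsHomogPoly k (P k)) ∧
      SubPoly f x P (m + 1) (P (m + 1)) ∧ SupPoly f x P (m + 1) (P (m + 1)) := by
  have hhom : (∀ k ∈ Icc 1 (m + 1), IsHomogPoly k (P k)) ↔
      (∀ k ∈ Icc 1 m, IsHomogPoly k (P k)) ∧ IsHomogPoly (m + 1) (P (m + 1)) := by
    refine ⟨fun H => ⟨fun k hk => H k (Icc_subset_Icc_right m.le_succ hk), H _ (by simp)⟩,
      fun H k hk => ?_⟩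
    rcases (mem_Icc.mp hk).2.lt_or_eq with hlt | rfl
    · exact H.1 k (mem_Icc.mpr ⟨(mem_Icc.mp hk).1, Nat.le_of_lt_succ hlt⟩)
    · exact H.2
  have hrem : ∀ h, f (x + h) - f x - ∑ k ∈ Icc 1 (m + 1), P k h =
      f (x + h) - f x - ∑ k ∈ Icc 1 m, P k h - P (m + 1) h := fun h => by
    rw [sum_Icc_succ_top (by omega)]
    ring
  simp only [HasTaylorExpansion, SubPoly, SupPoly, hhom, hrem, Nat.add_sub_cancel,
    tendsto_norm_div_zero_iff_forall_eventually fun h => pow_nonneg (norm_nonneg h) _]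
  tauto

lemma sum_Icc_pred_update (Q' : Euc N → ℝ) (h : Euc N) :
    ∑ k ∈ Icc 1 (n - 1), Function.update P n Q' k h = ∑ k ∈ Icc 1 (n - 1), P k h :=
  sum_congr rfl fun k hk => by rw [Function.update_of_ne (by simp at hk; omega)]

lemma subPoly_update_iff {Q' : Euc N → ℝ} :
    SubPoly f x (Function.update P n Q') n Q ↔ SubPoly f x P n Q := by
  simp only [SubPoly, sum_Icc_pred_update]

lemma supPoly_update_iff {Q' : Euc N → ℝ} :
    SupPoly f x (Function.update P n Q') n Q ↔ SupPoly f x P n Q := by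
  simp only [SupPoly, sum_Icc_pred_update]

lemma SubPoly.eq_of_supPoly (hodd : Odd n) (h₁ : SubPoly f x P n Q₁) (h₂ : SupPoly f x P n Q₂) :
    Q₁ = Q₂ := by
  have hD := h₂.1.sub h₁.1
  have hev : ∀ ε > (0 : ℝ), ∀ᶠ h in 𝓝[≠] (0 : Euc N), -ε ≤ (Q₂ - Q₁) h / ‖h‖ ^ n := by
    intro ε hε
    filter_upwards [h₁.2 (ε / 2) (by positivity), h₂.2 (ε / 2) (by positivity)] with h hlo hhi
    have hsplit : (Q₂ - Q₁) h / ‖h‖ ^ n =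
        (f (x + h) - f x - ∑ k ∈ Icc 1 (n - 1), P k h - Q₁ h) / ‖h‖ ^ n -
        (f (x + h) - f x - ∑ k ∈ Icc 1 (n - 1), P k h - Q₂ h) / ‖h‖ ^ n := by
      rw [Pi.sub_apply]
      ring
    linarith
  have hzero := hD.eq_zero_of_odd hodd fun v hv => hD.nonneg_of_eventually_ge hev hv
  exact (sub_eq_zero.mp hzero).symm

end Subdifferential

theorem taylor_iff_sub_and_sup_odd_general {N n : ℕ} (hodd : Odd n)
    (f : Euc N → ℝ) (x : Euc N) :
    ((∃ P : ℕ → Euc N → ℝ, HasTaylorExpansion f x P n) ↔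
      (∃ P : ℕ → Euc N → ℝ, HasTaylorExpansion f x P (n - 1) ∧
        (∃ Q, SubPoly f x P n Q) ∧ (∃ Q, SupPoly f x P n Q))) ∧
    ∀ P : ℕ → Euc N → ℝ, HasTaylorExpansion f x P n →
      ∀ Q : Euc N → ℝ, (SubPoly f x P n Q ↔ Q = P n) ∧ (SupPoly f x P n Q ↔ Q = P n) := by
  obtain ⟨m, rfl⟩ := Nat.exists_eq_add_one_of_ne_zero hodd.pos.ne'
  rw [Nat.add_sub_cancel]
  refine ⟨⟨fun ⟨P, hP⟩ => ?_, fun ⟨P, hP, ⟨Q₁, h₁⟩, ⟨Q₂, h₂⟩⟩ => ?_⟩, fun P hP Q => ?_⟩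
  · obtain ⟨-, hsub, hsup⟩ := hasTaylorExpansion_succ_iff.mp hP
    exact ⟨P, hP.of_succ, ⟨_, hsub⟩, ⟨_, hsup⟩⟩
  · obtain rfl := h₁.eq_of_supPoly hodd h₂
    refine ⟨Function.update P (m + 1) Q₁, hasTaylorExpansion_succ_iff.mpr ⟨fun k hk => ?_, ?_, ?_⟩⟩
    · rw [Function.update_of_ne (by simp at hk; omega)]
      exact hP.1 k hk
    · simpa [subPoly_update_iff] using h₁
    · simpa [supPoly_update_iff] using h₂
  · obtain ⟨-, hsub, hsup⟩ := hasTaylorExpansion_succ_iff.mp hP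
    exact ⟨⟨fun hQ => hQ.eq_of_supPoly hodd hsup, fun hQ => hQ ▸ hsub⟩,
      ⟨fun hQ => (hsub.eq_of_supPoly hodd hQ).symm, fun hQ => hQ ▸ hsup⟩⟩

/-- For odd `n ≥ 3`: `f` has a Taylor expansion of order `n` at `x` iff it has one of
order `n-1` and both `∂ⁿ f(x)` and `∂₊ⁿ f(x)` are nonempty; in that case
`∂ⁿ f(x) = ∂₊ⁿ f(x) = {Pₓⁿ}`. -/
theorem taylor_iff_sub_and_sup_odd {N n : ℕ} (hn : 3 ≤ n) (hodd : Odd n)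
    (f : Euc N → ℝ) (x : Euc N) :
    ((∃ P : ℕ → Euc N → ℝ, HasTaylorExpansion f x P n) ↔
      (∃ P : ℕ → Euc N → ℝ, HasTaylorExpansion f x P (n - 1) ∧
        (∃ Q, SubPoly f x P n Q) ∧ (∃ Q, SupPoly f x P n Q))) ∧
    ∀ P : ℕ → Euc N → ℝ, HasTaylorExpansion f x P n →
      ∀ Q : Euc N → ℝ, (SubPoly f x P n Q ↔ Q = P n) ∧ (SupPoly f x P n Q ↔ Q = P n) :=
  taylor_iff_sub_and_sup_odd_general hodd f x
end
end

section
/- Define the function f₁ : ℝ → ℝ by f₁(x) = −x² for x ≤ 0 and f₁(x) = −x² + x³ for x > 0. Then Df₁(0) = 0, the second-order Taylor term at 0 is P²(h) = −h², and a 3-homogeneous polynomial T(h) = a h³ belongs to ∂³ f₁(0) if and only if a ∈ [0,1]. -/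
/-!
The whole computation rests on the identity `f₁(h) + h² = (max h 0)³`. The Taylor remainder is
therefore `O(|h|³)`, which gives both `Df₁(0) = 0` and the second-order expansion, and the
third-order quotient `(f₁(h) + h² - a h³) / |h|³` is the constant `a` for `h < 0` and `1 - a` for
`h > 0`; its lower limit `min a (1 - a)` is nonnegative exactly when `a ∈ [0, 1]`.
-/

open Filter Topology

noncomputable section

def f1 (x : ℝ) : ℝ := if x ≤ 0 then -x ^ 2 else -x ^ 2 + x ^ 3

open Asymptotics

theorem hasDerivAt_zero_of_isBigO_sq {𝕜 F : Type*} [NontriviallyNormedField 𝕜]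
    [NormedAddCommGroup F] [NormedSpace 𝕜 F] {f : 𝕜 → F} {x : 𝕜}
    (hf : (fun h => f (x + h) - f x) =O[𝓝 0] fun h => h ^ 2) : HasDerivAt f 0 x := by
  rw [hasDerivAt_iff_isLittleO_nhds_zero]
  simpa using hf.trans_isLittleO (isLittleO_pow_id one_lt_two)

theorem forall_pos_eventually_neg_le_iff_of_eventuallyEq {α : Type*} {l : Filter α} [l.NeBot]
    {q : α → ℝ} {c : ℝ} (hq : q =ᶠ[l] fun _ => c) : (∀ ε > 0, ∀ᶠ x in l, -ε ≤ q x) ↔ 0 ≤ c := by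
  have hconst (ε : ℝ) : (∀ᶠ x in l, -ε ≤ q x) ↔ -ε ≤ c :=
    (eventually_congr (hq.mono fun x hx => by rw [hx])).trans eventually_const
  simp only [hconst]
  exact ⟨fun h => le_of_forall_pos_le_add fun ε hε => by linarith [h ε hε],
    fun hc ε hε => by linarith⟩

theorem f1_sub_taylor_eq (h : ℝ) : f1 h - f1 0 - -(h ^ 2) = max h 0 ^ 3 := by
  rcases le_or_gt h 0 with hh | hh
  · simp [f1, hh]
  · simp [f1, hh.not_ge, hh.le]

theorem abs_f1_sub_taylor_le (h : ℝ) : |f1 h - f1 0 - -(h ^ 2)| ≤ |h| ^ 3 := by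
  rw [f1_sub_taylor_eq, abs_pow, abs_of_nonneg (le_max_right h 0)]
  exact pow_le_pow_left₀ (le_max_right h 0) (max_le (le_abs_self h) (abs_nonneg h)) 3

theorem f1_third_quotient_of_neg {a h : ℝ} (hh : h < 0) :
    (f1 h - f1 0 - -(h ^ 2) - a * h ^ 3) / |h| ^ 3 = a := by
  rw [f1_sub_taylor_eq, max_eq_right hh.le, abs_of_neg hh]
  field_simp [hh.ne]
  ring

theorem f1_third_quotient_of_pos {a h : ℝ} (hh : 0 < h) :
    (f1 h - f1 0 - -(h ^ 2) - a * h ^ 3) / |h| ^ 3 = 1 - a := by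
  rw [f1_sub_taylor_eq, max_eq_left hh.le, abs_of_pos hh]
  field_simp [hh.ne']

theorem f1_hasDerivAt_zero : HasDerivAt f1 0 0 := by
  refine hasDerivAt_zero_of_isBigO_sq ?_
  have hremainder : (fun h : ℝ => f1 h - f1 0 - -(h ^ 2)) =O[𝓝 0] fun h => h ^ 3 :=
    isBigO_of_le _ fun h => by simpa using abs_f1_sub_taylor_le h
  simpa using (isBigO_refl (fun h : ℝ => h ^ 2) _).neg_left.add
    (hremainder.trans (isLittleO_pow_pow (by norm_num : 2 < 3)).isBigO)

theorem f1_taylor_two :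
    Tendsto (fun h : ℝ => (f1 h - f1 0 - -(h ^ 2)) / |h| ^ 2) (𝓝[≠] 0) (𝓝 0) := by
  refine squeeze_zero_norm (fun h => ?_)
    ((continuous_abs.tendsto' 0 0 abs_zero).mono_left nhdsWithin_le_nhds)
  rw [norm_div, Real.norm_eq_abs, Real.norm_eq_abs, abs_pow, abs_abs]
  refine div_le_of_le_mul₀ (by positivity) (abs_nonneg h) ?_
  exact (abs_f1_sub_taylor_le h).trans_eq (by ring)

/-- `Df₁(0) = 0`, the second-order Taylor part of `f₁` at `0` is `P²(h) = -h²`, and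
`T(h) = a h³` belongs to `∂³ f₁(0)` iff `a ∈ [0,1]`. -/
theorem f1_derivative_taylor_and_subdiff :
    HasDerivAt f1 0 0 ∧
    Tendsto (fun h : ℝ => (f1 h - f1 0 - (-(h ^ 2))) / |h| ^ 2) (𝓝[≠] (0 : ℝ)) (𝓝 0) ∧
    ∀ a : ℝ,
      (∀ ε > (0 : ℝ), ∀ᶠ h in 𝓝[≠] (0 : ℝ),
        -ε ≤ (f1 h - f1 0 - (-(h ^ 2)) - a * h ^ 3) / |h| ^ 3) ↔ a ∈ Set.Icc (0 : ℝ) 1 := by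
  refine ⟨f1_hasDerivAt_zero, f1_taylor_two, fun a => ?_⟩
  have hleft := forall_pos_eventually_neg_le_iff_of_eventuallyEq (l := 𝓝[<] (0 : ℝ))
    (eventually_mem_nhdsWithin.mono fun h hh => f1_third_quotient_of_neg (a := a) hh)
  have hright := forall_pos_eventually_neg_le_iff_of_eventuallyEq (l := 𝓝[>] (0 : ℝ))
    (eventually_mem_nhdsWithin.mono fun h hh => f1_third_quotient_of_pos (a := a) hh)
  rw [← nhdsLT_sup_nhdsGT]
  simp only [eventually_sup, imp_and, forall_and, hleft, hright, Set.mem_Icc, sub_nonneg]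
end
end

section
/- Let P_n(x,y) = −(n x² + (1/n) y²) and f : ℝ² → ℝ, f(x,y) = sup_n P_n(x,y). Then: (i) f is 2-homogeneous and −|(x,y)|² ≤ f(x,y) ≤ min{−x², −2|xy|}; (ii) Df(0,0) = (0,0); (iii) P_n ∈ ∂² f(0,0) for every n; and (iv) every 2-homogeneous polynomial P ∈ ∂² f(0,0) satisfies sup_{|v|=1} P(v) < 0. Consequently sup{P(v) : |v| = 1, P ∈ ∂² f(0,0)} = 0 while each individual P ∈ ∂² f(0,0) is negative definite. -/
open Filter Topology Finset

noncomputable section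

/-- `Pₙ(x,y) = -(n x² + y²/n)` for `n ≥ 1` (indexed here by `n+1`, `n : ℕ`). -/
def Pex (n : ℕ) (v : Euc 2) : ℝ := -(((n : ℝ) + 1) * (v 0) ^ 2 + (v 1) ^ 2 / ((n : ℝ) + 1))

/-- `f(x,y) = supₙ Pₙ(x,y)`. -/
def fex (v : Euc 2) : ℝ := ⨆ n : ℕ, Pex n v

/-- `P ∈ ∂² fex(0̄)`: the liminf condition (note `fex 0̄ = 0` and `D fex(0̄) = 0`). -/
def MemSub2 (P : Euc 2 → ℝ) : Prop :=
  ∀ ε > (0 : ℝ), ∀ᶠ h in 𝓝[≠] (0 : Euc 2), -ε ≤ (fex h - fex 0 - P h) / ‖h‖ ^ 2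

/-!
Every `Pₙ` lies below `f`, so it belongs to `∂² f(0)`. Conversely, for a 2-homogeneous `P` the
quotient `(f h - P h) / ‖h‖²` is constant along rays, so `P ∈ ∂² f(0)` exactly when `P ≤ f`.
Such a `P` is negative off the `y`-axis because `f ≤ -x²`. On the `y`-axis, the parallelogram law
for `P` and `f ≤ -2|xy|` along `e₁ ± t e₀` give `P e₁ + t² P e₀ ≤ -2t` for all `t > 0`, which
forces `P e₁ < 0`. Yet `Pₙ e₁ = -1/n → 0`.
-/

section HomogeneousPolynomial

variable {N : ℕ}

lemma IsHomogPoly.continuous {F : Type*} [NormedAddCommGroup F] [NormedSpace ℝ F] {k : ℕ}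
    {P : Euc N → F} (hP : IsHomogPoly k P) : Continuous P := by
  obtain ⟨M, hM⟩ := hP
  rw [funext hM]
  fun_prop

lemma IsHomogPoly.map_smul_s11 {F : Type*} [NormedAddCommGroup F] [NormedSpace ℝ F] {k : ℕ}
    {P : Euc N → F} (hP : IsHomogPoly k P) (t : ℝ) (v : Euc N) : P (t • v) = t ^ k • P v := by
  obtain ⟨M, hM⟩ := hP
  simpa [hM] using M.map_smul_univ (fun _ => t) (fun _ => v)

lemma IsHomogPoly.map_add_add_map_sub {F : Type*} [NormedAddCommGroup F] [NormedSpace ℝ F]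
    {P : Euc N → F} (hP : IsHomogPoly 2 P) (v w : Euc N) :
    P (v + w) + P (v - w) = (2 : ℝ) • P v + (2 : ℝ) • P w := by
  obtain ⟨M, hM⟩ := hP
  let B : LinearMap.BilinMap ℝ (Euc N) F :=
    LinearMap.mk₂ ℝ (fun x y => M ![x, y]) (fun x x' _ => M.cons_add _ x x')
      (fun c x _ => M.cons_smul _ c x) (fun x y y' => (M.curryLeft x).cons_add _ y y')
      (fun c x y => (M.curryLeft x).cons_smul _ c y)
  have hB : ∀ x, P x = B x x := fun x => by
    rw [hM]
    change _ = M ![x, x]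
    rw [Matrix.vec_single_eq_const, Matrix.vecCons_const]
  simp only [hB, map_add, map_sub, LinearMap.add_apply, LinearMap.sub_apply]
  module

lemma isHomogPoly_sq_coord (i : Fin N) : IsHomogPoly 2 (fun v : Euc N => v i ^ 2) :=
  ⟨(ContinuousMultilinearMap.mkPiAlgebra ℝ (Fin 2) ℝ).compContinuousLinearMap
    (fun _ => EuclideanSpace.proj i), fun v => by simp [sq]⟩

end HomogeneousPolynomial

lemma two_mul_abs_mul_le_mul_sq_add_sq_div {a : ℝ} (ha : 0 < a) (x y : ℝ) :
    2 * |x * y| ≤ a * x ^ 2 + y ^ 2 / a := by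
  have hsq : a * x ^ 2 + y ^ 2 / a - 2 * |x * y| = (a * |x| - |y|) ^ 2 / a := by
    field_simp
    rw [abs_mul]
    ring_nf
    simp only [sq_abs]
  linarith [div_nonneg (sq_nonneg (a * |x| - |y|)) ha.le]

lemma Pex_le_neg_sq (n : ℕ) (v : Euc 2) : Pex n v ≤ -v 0 ^ 2 := by
  have hn : (1 : ℝ) ≤ n + 1 := by simp
  have : v 0 ^ 2 ≤ (n + 1) * v 0 ^ 2 := le_mul_of_one_le_left (sq_nonneg _) hn
  have : 0 ≤ v 1 ^ 2 / ((n : ℝ) + 1) := by positivity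
  unfold Pex
  linarith

lemma Pex_le_neg_two_mul_abs (n : ℕ) (v : Euc 2) : Pex n v ≤ -(2 * |v 0 * v 1|) :=
  neg_le_neg (two_mul_abs_mul_le_mul_sq_add_sq_div (by positivity) _ _)

lemma Pex_zero_apply (v : Euc 2) : Pex 0 v = -‖v‖ ^ 2 := by
  simp [Pex, EuclideanSpace.norm_sq_eq, Fin.sum_univ_two]

lemma Pex_single_one (n : ℕ) : Pex n (EuclideanSpace.single 1 1) = -1 / ((n : ℝ) + 1) := by
  simp [Pex, neg_div]

lemma isHomogPoly_Pex (n : ℕ) : IsHomogPoly 2 (Pex n) := by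
  obtain ⟨M₀, hM₀⟩ := isHomogPoly_sq_coord (N := 2) 0
  obtain ⟨M₁, hM₁⟩ := isHomogPoly_sq_coord (N := 2) 1
  refine ⟨-(((n : ℝ) + 1) • M₀ + ((n : ℝ) + 1)⁻¹ • M₁), fun v => ?_⟩
  simp [Pex, ← hM₀, ← hM₁, div_eq_inv_mul]

lemma bddAbove_range_Pex (v : Euc 2) : BddAbove (Set.range fun n => Pex n v) :=
  ⟨_, Set.forall_mem_range.2 fun n => Pex_le_neg_sq n v⟩

lemma Pex_le_fex (n : ℕ) (v : Euc 2) : Pex n v ≤ fex v :=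
  le_ciSup (bddAbove_range_Pex v) n

lemma fex_le_neg_sq (v : Euc 2) : fex v ≤ -v 0 ^ 2 :=
  ciSup_le fun n => Pex_le_neg_sq n v

lemma fex_le_neg_two_mul_abs (v : Euc 2) : fex v ≤ -(2 * |v 0 * v 1|) :=
  ciSup_le fun n => Pex_le_neg_two_mul_abs n v

lemma neg_norm_sq_le_fex (v : Euc 2) : -‖v‖ ^ 2 ≤ fex v :=
  Pex_zero_apply v ▸ Pex_le_fex 0 v

lemma fex_smul (t : ℝ) (v : Euc 2) : fex (t • v) = t ^ 2 * fex v := by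
  simp only [fex]
  rw [Real.mul_iSup_of_nonneg (by positivity)]
  refine iSup_congr fun n => ?_
  simpa using (isHomogPoly_Pex n).map_smul_s11 t v

lemma fex_zero : fex 0 = 0 := by
  simpa using fex_smul 0 (0 : Euc 2)

lemma abs_fex_le (v : Euc 2) : |fex v| ≤ ‖v‖ ^ 2 :=
  abs_le.2 ⟨neg_norm_sq_le_fex v, (fex_le_neg_sq v).trans (by nlinarith [sq_nonneg ‖v‖])⟩

lemma hasFDerivAt_fex : HasFDerivAt fex (0 : Euc 2 →L[ℝ] ℝ) 0 :=
  (Asymptotics.IsBigO.of_bound 1 (Eventually.of_forall fun v => by simpa using abs_fex_le v))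
    |>.hasFDerivAt one_lt_two

lemma nonneg_of_forall_eventually_le_div_norm_sq {E : Type*} [NormedAddCommGroup E]
    [NormedSpace ℝ E] {g : E → ℝ} (hg : ∀ t : ℝ, 0 < t → ∀ v, g (t • v) = t ^ 2 * g v)
    (h : ∀ ε > (0 : ℝ), ∀ᶠ w in 𝓝[≠] (0 : E), -ε ≤ g w / ‖w‖ ^ 2) (v : E) : 0 ≤ g v := by
  rcases eq_or_ne v 0 with rfl | hv
  · have := hg 2 two_pos 0
    simp only [smul_zero] at this
    linarith
  have hline : Tendsto (fun t : ℝ => t • v) (𝓝[>] 0) (𝓝[≠] 0) := by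
    refine tendsto_nhdsWithin_of_tendsto_nhds_of_eventually_within _ ?_ ?_
    · exact (Continuous.tendsto' (by fun_prop) 0 0 (zero_smul ℝ v)).mono_left nhdsWithin_le_nhds
    · filter_upwards [self_mem_nhdsWithin] with t ht
      exact smul_ne_zero (ne_of_gt ht) hv
  suffices ∀ ε > 0, -ε ≤ g v / ‖v‖ ^ 2 by
    have hq : 0 ≤ g v / ‖v‖ ^ 2 := le_of_forall_pos_le_add fun ε hε => by linarith [this ε hε]
    simpa using (le_div_iff₀ (by positivity)).1 hq
  intro ε hε
  obtain ⟨t, hle, ht : 0 < t⟩ := ((hline.eventually (h ε hε)).and self_mem_nhdsWithin).exists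
  rwa [hg t ht, norm_smul, Real.norm_of_nonneg ht.le, mul_pow, mul_div_mul_left _ _ (by positivity)]
    at hle

lemma memSub2_of_le_fex {P : Euc 2 → ℝ} (hP : ∀ v, P v ≤ fex v) : MemSub2 P := by
  intro ε hε
  refine Eventually.of_forall fun w => (neg_neg_of_pos hε).le.trans ?_
  rw [fex_zero, sub_zero]
  exact div_nonneg (sub_nonneg.2 (hP w)) (by positivity)

lemma le_fex_of_memSub2 {P : Euc 2 → ℝ} (hP : IsHomogPoly 2 P) (hS : MemSub2 P) (v : Euc 2) :
    P v ≤ fex v := by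
  have hg : ∀ t : ℝ, 0 < t → ∀ w, fex (t • w) - P (t • w) = t ^ 2 * (fex w - P w) :=
    fun t _ w => by rw [fex_smul, hP.map_smul_s11, smul_eq_mul, mul_sub]
  have := nonneg_of_forall_eventually_le_div_norm_sq hg
    (fun ε hε => by simpa only [fex_zero, sub_zero] using hS ε hε) v
  linarith

lemma IsHomogPoly.apply_single_one_neg {P : Euc 2 → ℝ} (hP : IsHomogPoly 2 P)
    (hle : ∀ v, P v ≤ -(2 * |v 0 * v 1|)) : P (EuclideanSpace.single 1 1) < 0 := by
  set e₀ : Euc 2 := EuclideanSpace.single 0 1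
  set e₁ : Euc 2 := EuclideanSpace.single 1 1
  set A := P e₀
  have hbound : ∀ t : ℝ, 0 < t → P e₁ + t ^ 2 * A ≤ -(2 * t) := fun t ht => by
    have hpar := hP.map_add_add_map_sub e₁ (t • e₀)
    rw [hP.map_smul_s11] at hpar
    have hplus := hle (e₁ + t • e₀)
    have hminus := hle (e₁ - t • e₀)
    simp [e₀, e₁, abs_of_pos ht] at hpar hplus hminus
    linarith
  -- small enough that `t ^ 2 * A ≥ -t * (1 - t)`
  set t := 1 / (|A| + 1)
  have ht : 0 < t := by positivity
  have ht_mul : t * (t * (|A| + 1)) = t := by simp [t, field]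
  nlinarith [hbound t ht, mul_nonneg (sq_nonneg t) (neg_le_iff_add_nonneg.1 (neg_abs_le A))]

lemma IsHomogPoly.neg_of_le_fex {P : Euc 2 → ℝ} (hP : IsHomogPoly 2 P) (hle : ∀ v, P v ≤ fex v)
    {v : Euc 2} (hv : v ≠ 0) : P v < 0 := by
  by_cases h₀ : v 0 = 0
  · have hv₁ : v 1 ≠ 0 := fun h₁ => hv (by ext i; fin_cases i <;> simp [h₀, h₁])
    have hv_eq : v = v 1 • EuclideanSpace.single 1 1 := by
      ext i; fin_cases i <;> simp [h₀]
    rw [hv_eq, hP.map_smul_s11, smul_eq_mul]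
    exact mul_neg_of_pos_of_neg (by positivity)
      (hP.apply_single_one_neg fun w => (hle w).trans (fex_le_neg_two_mul_abs w))
  · linarith [hle v, fex_le_neg_sq v, pow_pos (abs_pos.2 h₀) 2, sq_abs (v 0)]

lemma iSup_sphere_lt_zero {E : Type*} [NormedAddCommGroup E] [NormedSpace ℝ E] [ProperSpace E]
    [Nontrivial E] {P : E → ℝ} (hP : Continuous P)
    (hneg : ∀ v ∈ Metric.sphere (0 : E) 1, P v < 0) :
    (⨆ v : Metric.sphere (0 : E) 1, P v) < 0 := by
  rw [← sSup_image']
  exact ((isCompact_sphere 0 1).sSup_lt_iff_of_continuous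
    (NormedSpace.sphere_nonempty.2 zero_le_one) hP.continuousOn 0).2 hneg

lemma sSup_memSub2_sphere_eq_zero :
    sSup {r : ℝ | ∃ P : Euc 2 → ℝ, IsHomogPoly 2 P ∧ MemSub2 P ∧
      ∃ v : Euc 2, ‖v‖ = 1 ∧ r = P v} = 0 := by
  have hmem : ∀ n : ℕ, -1 / ((n : ℝ) + 1) ∈ {r : ℝ | ∃ P : Euc 2 → ℝ, IsHomogPoly 2 P ∧
      MemSub2 P ∧ ∃ v : Euc 2, ‖v‖ = 1 ∧ r = P v} := fun n =>
    ⟨Pex n, isHomogPoly_Pex n, memSub2_of_le_fex (Pex_le_fex n), _, by simp,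
      (Pex_single_one n).symm⟩
  refine csSup_eq_of_forall_le_of_forall_lt_exists_gt ⟨_, hmem 0⟩ ?_ fun w hw => ?_
  · rintro r ⟨P, hP, hS, v, hv, rfl⟩
    exact (hP.neg_of_le_fex (le_fex_of_memSub2 hP hS) (by rintro rfl; simp at hv)).le
  · obtain ⟨n, hn⟩ := exists_nat_one_div_lt (neg_pos.2 hw)
    exact ⟨_, hmem n, by rw [neg_div]; linarith⟩

/-- The function `f(x,y) = supₙ -(n x² + y²/n)` is 2-homogeneous, satisfies
`-|(x,y)|² ≤ f(x,y) ≤ min{-x², -2|xy|}`, has `Df(0̄) = 0̄`, each `Pₙ ∈ ∂² f(0̄)`, every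
`P ∈ ∂² f(0̄)` satisfies `sup_{|v|=1} P(v) < 0`, and nevertheless
`sup {P(v) : |v| = 1, P ∈ ∂² f(0̄)} = 0`. -/
theorem fex_properties :
    (∀ t : ℝ, 0 ≤ t → ∀ v : Euc 2, fex (t • v) = t ^ 2 * fex v) ∧
    (∀ v : Euc 2, -‖v‖ ^ 2 ≤ fex v ∧ fex v ≤ min (-(v 0) ^ 2) (-(2 * |v 0 * v 1|))) ∧
    HasFDerivAt fex (0 : Euc 2 →L[ℝ] ℝ) 0 ∧
    (∀ n : ℕ, MemSub2 (Pex n)) ∧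
    (∀ P : Euc 2 → ℝ, IsHomogPoly 2 P → MemSub2 P →
      (⨆ v : Metric.sphere (0 : Euc 2) 1, P v) < 0) ∧
    sSup {r : ℝ | ∃ P : Euc 2 → ℝ, IsHomogPoly 2 P ∧ MemSub2 P ∧
      ∃ v : Euc 2, ‖v‖ = 1 ∧ r = P v} = 0 :=
  ⟨fun t _ v => fex_smul t v,
    fun v => ⟨neg_norm_sq_le_fex v, le_min (fex_le_neg_sq v) (fex_le_neg_two_mul_abs v)⟩,
    hasFDerivAt_fex,
    fun n => memSub2_of_le_fex (Pex_le_fex n),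
    fun _ hP hS => iSup_sphere_lt_zero hP.continuous fun _ hv =>
      hP.neg_of_le_fex (le_fex_of_memSub2 hP hS) (ne_zero_of_mem_unit_sphere ⟨_, hv⟩),
    sSup_memSub2_sphere_eq_zero⟩
end
end

section
/- Let f : ℝ → ℝ be lower semicontinuous and let C_f = {x ∈ ℝ : 0 ∈ ∂f(x)}, where 0 ∈ ∂f(x) means liminf_{t→0} (f(x+t) − f(x))/|t| ≥ 0. Then the image f(C_f) has Lebesgue measure zero in ℝ. -/
/-!
If `0 ∈ ∂f(x)`, then for every `ε > 0` the point `x` is an `ε`-approximate local minimum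
of `f`: `f x ≤ f y + ε * dist x y` whenever `dist x y ≤ δ`, for some `δ > 0`. Two such
points at distance at most `δ` bound each other's values, so `f` is `ε`-Lipschitz on the
`ε`-approximate minima of scale `δ` inside any interval of length `δ`. Cutting a unit
interval into pieces of length `δ` shows that these points have an image of measure at
most `ε`; letting `δ → 0` (continuity from below) and then `ε → 0` gives the result.
-/

open Filter Topology MeasureTheory Set

def approxLocalMinSet {X : Type*} [PseudoMetricSpace X] (f : X → ℝ) (ε δ : ℝ) : Set X :=
  {x | ∀ y, dist x y ≤ δ → f x ≤ f y + ε * dist x y}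

def frechetCriticalSet (f : ℝ → ℝ) : Set ℝ :=
  {x : ℝ | ∀ ε > (0 : ℝ), ∀ᶠ t in 𝓝[≠] (0 : ℝ), -ε ≤ (f (x + t) - f x) / |t|}

theorem LipschitzOnWith.ediam_image_le {X Y : Type*} [PseudoEMetricSpace X]
    [PseudoEMetricSpace Y] {K : NNReal} {f : X → Y} {s : Set X} (hf : LipschitzOnWith K f s) :
    Metric.ediam (f '' s) ≤ K * Metric.ediam s :=
  Metric.ediam_image_le_iff.2 fun _x hx _y hy =>
    (hf hx hy).trans (mul_le_mul_right (Metric.edist_le_ediam_of_mem hx hy) _)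

section approxLocalMinSet

variable {X : Type*} [PseudoMetricSpace X] {f : X → ℝ} {ε δ : ℝ}

theorem approxLocalMinSet_antitone (f : X → ℝ) (ε : ℝ) : Antitone (approxLocalMinSet f ε) :=
  fun _δ _δ' hδ _x hx y hy => hx y (hy.trans hδ)

theorem lipschitzOnWith_approxLocalMinSet_inter {s : Set X}
    (hs : ∀ x ∈ s, ∀ y ∈ s, dist x y ≤ δ) :
    LipschitzOnWith (Real.toNNReal ε) f (approxLocalMinSet f ε δ ∩ s) :=
  LipschitzOnWith.of_le_add_mul' ε fun x hx y hy => hx.1 y (hs x hx.2 y hy.2)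

end approxLocalMinSet

section Real

variable {f : ℝ → ℝ} {ε δ : ℝ}

theorem volume_image_approxLocalMinSet_inter_Ico_le (hε : 0 ≤ ε) (a : ℝ) :
    volume (f '' (approxLocalMinSet f ε δ ∩ Ico a (a + δ))) ≤ ENNReal.ofReal (ε * δ) := by
  have hlip := lipschitzOnWith_approxLocalMinSet_inter (f := f) (ε := ε)
    fun x hx y hy => (Real.dist_le_of_mem_Icc (Ico_subset_Icc_self hx)
      (Ico_subset_Icc_self hy)).trans_eq (add_sub_cancel_left a δ)
  calc volume (f '' (approxLocalMinSet f ε δ ∩ Ico a (a + δ)))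
      ≤ Metric.ediam (f '' (approxLocalMinSet f ε δ ∩ Ico a (a + δ))) := Real.volume_le_diam _
    _ ≤ ENNReal.ofReal ε * Metric.ediam (Ico a (a + δ)) :=
        hlip.ediam_image_le.trans (mul_le_mul_right (Metric.ediam_mono inter_subset_right) _)
    _ = ENNReal.ofReal (ε * δ) := by
        rw [Real.ediam_Ico, add_sub_cancel_left, ENNReal.ofReal_mul hε]

theorem volume_image_approxLocalMinSet_inter_Ico_le_mul (hε : 0 ≤ ε) (hδ : 0 ≤ δ) (a : ℝ)
    (n : ℕ) : volume (f '' (approxLocalMinSet f ε δ ∩ Ico a (a + n * δ))) ≤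
      n * ENNReal.ofReal (ε * δ) := by
  induction n with
  | zero => simp
  | succ n ih =>
    have hsplit : Ico a (a + (n + 1 : ℕ) * δ) =
        Ico a (a + n * δ) ∪ Ico (a + n * δ) (a + n * δ + δ) := by
      rw [Ico_union_Ico_eq_Ico (by nlinarith [n.cast_nonneg (α := ℝ)]) (by linarith)]
      push_cast; ring_nf
    calc volume (f '' (approxLocalMinSet f ε δ ∩ Ico a (a + (n + 1 : ℕ) * δ)))
        ≤ volume (f '' (approxLocalMinSet f ε δ ∩ Ico a (a + n * δ))) +
          volume (f '' (approxLocalMinSet f ε δ ∩ Ico (a + n * δ) (a + n * δ + δ))) := by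
          rw [hsplit, inter_union_distrib_left, image_union]
          exact measure_union_le _ _
      _ ≤ n * ENNReal.ofReal (ε * δ) + ENNReal.ofReal (ε * δ) :=
          add_le_add ih (volume_image_approxLocalMinSet_inter_Ico_le hε _)
      _ = (n + 1 : ℕ) * ENNReal.ofReal (ε * δ) := by push_cast; ring

theorem frechetCriticalSet_subset_iUnion_approxLocalMinSet (hε : 0 < ε) :
    frechetCriticalSet f ⊆ ⋃ n : ℕ, approxLocalMinSet f ε (1 / (n + 1)) := by
  intro x hx
  obtain ⟨r, hr, hslope⟩ := Metric.eventually_nhds_iff.1 (eventually_nhdsWithin_iff.1 (hx ε hε))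
  obtain ⟨n, hn⟩ := exists_nat_one_div_lt hr
  refine mem_iUnion.2 ⟨n, fun y hy => ?_⟩
  rcases eq_or_ne y x with rfl | hyx
  · simp
  have hdist : dist x y = |y - x| := by rw [dist_comm, Real.dist_eq]
  have hpos : 0 < |y - x| := abs_pos.2 (sub_ne_zero.2 hyx)
  have h := hslope (by rw [Real.dist_eq, sub_zero, ← hdist]; exact hy.trans_lt hn)
    (sub_ne_zero.2 hyx)
  rw [add_sub_cancel, le_div_iff₀ hpos] at h
  rw [hdist]
  linarith

theorem volume_image_frechetCriticalSet_inter_Ico_le (hε : 0 < ε) (a : ℝ) :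
    volume (f '' (frechetCriticalSet f ∩ Ico a (a + 1))) ≤ ENNReal.ofReal ε := by
  have hmono :
      Monotone fun n : ℕ => f '' (approxLocalMinSet f ε (1 / (n + 1)) ∩ Ico a (a + 1)) :=
    fun m n hmn => image_mono (inter_subset_inter_left _ (approxLocalMinSet_antitone f ε
      (Nat.one_div_le_one_div hmn)))
  calc volume (f '' (frechetCriticalSet f ∩ Ico a (a + 1)))
      ≤ volume (⋃ n : ℕ, f '' (approxLocalMinSet f ε (1 / (n + 1)) ∩ Ico a (a + 1))) := by
        rw [← image_iUnion, ← iUnion_inter]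
        exact measure_mono (image_mono (inter_subset_inter_left _
          (frechetCriticalSet_subset_iUnion_approxLocalMinSet hε)))
    _ = ⨆ n : ℕ, volume (f '' (approxLocalMinSet f ε (1 / (n + 1)) ∩ Ico a (a + 1))) :=
        hmono.measure_iUnion
    _ ≤ ENNReal.ofReal ε := iSup_le fun n => by
        have hlen : a + 1 = a + (n + 1 : ℕ) * (1 / (n + 1) : ℝ) := by
          push_cast; field_simp
        rw [hlen]
        refine (volume_image_approxLocalMinSet_inter_Ico_le_mul hε.le (by positivity) a _
          ).trans_eq ?_
        rw [← ENNReal.ofReal_natCast, ← ENNReal.ofReal_mul (by positivity)]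
        push_cast; field_simp

theorem volume_image_frechetCriticalSet_inter_Ico_eq_zero (a : ℝ) :
    volume (f '' (frechetCriticalSet f ∩ Ico a (a + 1))) = 0 :=
  nonpos_iff_eq_zero.1 <| ENNReal.le_of_forall_pos_le_add fun ε hε _ => by
    simpa using volume_image_frechetCriticalSet_inter_Ico_le (f := f) hε a

end Real

theorem morse_sard_first_order_general (f : ℝ → ℝ) :
    volume (f '' {x : ℝ | ∀ ε > (0 : ℝ), ∀ᶠ t in 𝓝[≠] (0 : ℝ),
      -ε ≤ (f (x + t) - f x) / |t|}) = 0 := by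
  change volume (f '' frechetCriticalSet f) = 0
  have hcover : f '' frechetCriticalSet f ⊆
      ⋃ N : ℤ, f '' (frechetCriticalSet f ∩ Ico (N : ℝ) (N + 1)) := by
    rintro _ ⟨x, hx, rfl⟩
    obtain ⟨N, hN⟩ := mem_iUnion.1 (iUnion_Ico_intCast (α := ℝ) ▸ mem_univ x)
    exact mem_iUnion.2 ⟨N, x, ⟨hx, hN⟩, rfl⟩
  exact measure_mono_null hcover
    (measure_iUnion_null fun N => volume_image_frechetCriticalSet_inter_Ico_eq_zero N)

/-- Morse-Sard for the first-order subdifferential on the real line: for `f : ℝ → ℝ`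
lower semicontinuous, the image of `C_f = {x : 0 ∈ ∂f(x)}` is Lebesgue-null, where
`0 ∈ ∂f(x)` means `liminf_{t→0} (f(x+t) − f(x))/|t| ≥ 0`. -/
theorem morse_sard_first_order (f : ℝ → ℝ) (hf : LowerSemicontinuous f) :
    volume (f '' {x : ℝ | ∀ ε > (0 : ℝ), ∀ᶠ t in 𝓝[≠] (0 : ℝ),
      -ε ≤ (f (x + t) - f x) / |t|}) = 0 :=
  morse_sard_first_order_general f
end

section
/- Let f : ℝ² → ℝ be a lower semicontinuous function. Then the set f({x ∈ ℝ² : 0 ∈ ∂_P f(x)}) has one-dimensional Lebesgue measure zero, where ∂_P f(x) is the proximal subdifferential. -/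
/-!
Any two points `x, y` at distance `< η` at which `0 ∈ ∂_P f` with constants `σ, η` satisfy
`|f x - f y| ≤ σ |x - y|²`. At a Lebesgue density point `x` of a set `A` on which
this quadratic pinch holds, one can walk from `x` to any nearby `y ∈ A` through `T` points of
`A` that stay close to the segment `[x, y]`; summing the pinch over the `T` steps gives
`|f x - f y| ≤ 9σ |x - y|² / T`, so `f y - f x = o(|y - x|²)` along `A`. In the plane, the
Hölder bound `μH¹(f '' P) ≤ C · μH²(P)` for `|f x - f y| ≤ C |x - y|²` on `P` then makes the
image of the density points null (letting `C → 0`) and the image of the remaining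
`μH²`-null set null as well.
-/

open Filter Topology MeasureTheory
open Metric Set Asymptotics Function TopologicalSpace
open scoped ENNReal NNReal

section HausdorffImage

variable {X Y : Type*}

lemma HolderOnWith.of_dist_le [PseudoMetricSpace X] [PseudoMetricSpace Y] {C : ℝ≥0} {k : ℕ}
    {f : X → Y} {s : Set X} (h : ∀ x ∈ s, ∀ y ∈ s, dist (f x) (f y) ≤ C * dist x y ^ k) :
    HolderOnWith C k f s := by
  intro x hx y hy
  rw [edist_dist, edist_dist, NNReal.coe_natCast, ENNReal.rpow_natCast,
    ← ENNReal.ofReal_pow dist_nonneg, ← ENNReal.ofReal_coe_nnreal,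
    ← ENNReal.ofReal_mul C.coe_nonneg]
  exact ENNReal.ofReal_le_ofReal (h x hx y hy)

lemma exists_measurable_partition_subset_ball [PseudoMetricSpace X] [SeparableSpace X]
    [Nonempty X] [MeasurableSpace X] [OpensMeasurableSpace X] {δ : ℝ} (hδ : 0 < δ) :
    ∃ Q : ℕ → Set X, (∀ i, MeasurableSet (Q i)) ∧ Pairwise (Disjoint on Q) ∧
      ⋃ i, Q i = univ ∧ ∀ i, ∃ c, Q i ⊆ ball c δ := by
  obtain ⟨u, hu⟩ := exists_dense_seq X
  refine ⟨disjointed fun i => ball (u i) δ, MeasurableSet.disjointed fun _ => measurableSet_ball,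
    disjoint_disjointed _, ?_, fun i => ⟨u i, disjointed_subset _ i⟩⟩
  rw [iUnion_disjointed, eq_univ_iff_forall]
  intro x
  obtain ⟨i, hi⟩ := denseRange_iff.1 hu x δ hδ
  exact mem_iUnion.2 ⟨i, mem_ball.2 hi⟩

lemma tsum_measure_inter_le {α : Type*} [MeasurableSpace α] (μ : Measure α) {Q : ℕ → Set α}
    (hQ : ∀ i, MeasurableSet (Q i)) (hQd : Pairwise (Disjoint on Q)) (s : Set α) :
    ∑' i, μ (s ∩ Q i) ≤ μ s :=
  calc ∑' i, μ (s ∩ Q i) ≤ ∑' i, μ (toMeasurable μ s ∩ Q i) :=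
        ENNReal.tsum_le_tsum fun _ =>
          measure_mono (inter_subset_inter_left _ (subset_toMeasurable μ s))
    _ = μ (⋃ i, toMeasurable μ s ∩ Q i) :=
        (measure_iUnion (fun _ _ hij => (hQd hij).mono inter_subset_right inter_subset_right)
          fun i => (measurableSet_toMeasurable μ s).inter (hQ i)).symm
    _ ≤ μ s := (measure_mono (iUnion_subset fun _ => inter_subset_left)).trans_eq
        (measure_toMeasurable s)

variable [MetricSpace X] [SeparableSpace X] [MeasurableSpace X] [BorelSpace X]
  [MetricSpace Y] [MeasurableSpace Y] [BorelSpace Y]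

theorem hausdorffMeasure_image_le_of_dist_le {f : X → Y} {P : Set X} {C : ℝ≥0} {k : ℕ}
    (hk : 0 < k) {d : ℝ} (hd : 0 ≤ d) {δ : ℝ} (hδ : 0 < δ)
    (h : ∀ x ∈ P, ∀ y ∈ P, dist x y < δ → dist (f x) (f y) ≤ C * dist x y ^ k) :
    μH[d] (f '' P) ≤ (C : ℝ≥0∞) ^ d * μH[k * d] P := by
  rcases isEmpty_or_nonempty X with hX | hX
  · simp [eq_empty_of_isEmpty P]
  obtain ⟨Q, hQm, hQd, hQU, hQb⟩ :=
    exists_measurable_partition_subset_ball (X := X) (half_pos hδ)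
  have hpiece : ∀ i, μH[d] (f '' (P ∩ Q i)) ≤ (C : ℝ≥0∞) ^ d * μH[k * d] (P ∩ Q i) := by
    intro i
    obtain ⟨c, hc⟩ := hQb i
    have hHolder : HolderOnWith C k f (P ∩ Q i) := HolderOnWith.of_dist_le fun x hx y hy =>
      h x hx.1 y hy.1 <| calc
        dist x y ≤ dist x c + dist y c := dist_triangle_right x y c
        _ < δ / 2 + δ / 2 := add_lt_add (hc hx.2) (hc hy.2)
        _ = δ := add_halves δ
    simpa using hHolder.hausdorffMeasure_image_le (by exact_mod_cast hk) hd
  calc μH[d] (f '' P) = μH[d] (⋃ i, f '' (P ∩ Q i)) := by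
        rw [← image_iUnion, ← inter_iUnion, hQU, inter_univ]
    _ ≤ ∑' i, μH[d] (f '' (P ∩ Q i)) := measure_iUnion_le _
    _ ≤ ∑' i, (C : ℝ≥0∞) ^ d * μH[k * d] (P ∩ Q i) := ENNReal.tsum_le_tsum hpiece
    _ ≤ (C : ℝ≥0∞) ^ d * μH[k * d] P := by
        rw [ENNReal.tsum_mul_left]
        gcongr
        exact tsum_measure_inter_le _ hQm hQd P

variable {F : Type*} [NormedAddCommGroup F] [MeasurableSpace F] [BorelSpace F]

theorem hausdorffMeasure_image_le_mul_of_isLittleO {f : X → F} {S : Set X} {k : ℕ} (hk : 0 < k)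
    {d : ℝ} (hd : 0 ≤ d) (hS : ∀ x ∈ S, (fun y => f y - f x) =o[𝓝[S] x] fun y => dist y x ^ k)
    {ε : ℝ≥0} (hε : 0 < ε) :
    μH[d] (f '' S) ≤ (ε : ℝ≥0∞) ^ d * μH[k * d] S := by
  set S' : ℕ → Set X := fun m =>
    {x ∈ S | ∀ y ∈ S, dist y x < 1 / (m + 1) → ‖f y - f x‖ ≤ ε * dist y x ^ k}
  have hmono : Monotone S' := fun m n hmn x hx =>
    ⟨hx.1, fun y hy hxy => hx.2 y hy (hxy.trans_le (Nat.one_div_le_one_div hmn))⟩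
  have hcover : ⋃ m, S' m = S := by
    refine (iUnion_subset fun m => sep_subset _ _).antisymm fun x hx => ?_
    obtain ⟨r, hr, hball⟩ := Metric.eventually_nhds_iff.1 <| eventually_nhdsWithin_iff.1 <|
      isLittleO_iff.1 (hS x hx) (NNReal.coe_pos.2 hε)
    obtain ⟨m, hm⟩ := exists_nat_one_div_lt hr
    refine mem_iUnion.2 ⟨m, hx, fun y hy hyx => ?_⟩
    simpa using hball (hyx.trans hm) hy
  have hpiece (m : ℕ) : μH[d] (f '' S' m) ≤ (ε : ℝ≥0∞) ^ d * μH[k * d] (S' m) :=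
    hausdorffMeasure_image_le_of_dist_le hk hd (δ := 1 / (m + 1)) (by positivity)
      fun x hx y hy hxy => by
        simpa [dist_eq_norm', dist_comm] using hx.2 y hy.1 (by rwa [dist_comm])
  calc μH[d] (f '' S) = ⨆ m, μH[d] (f '' S' m) := by
        rw [← hcover, image_iUnion, Monotone.measure_iUnion fun m n h => image_mono (hmono h)]
    _ ≤ (ε : ℝ≥0∞) ^ d * μH[k * d] S :=
        iSup_le fun m => (hpiece m).trans (by gcongr; exact sep_subset _ _)

theorem hausdorffMeasure_image_eq_zero_of_isLittleO {k : ℕ} {d : ℝ}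
    [SigmaFinite (μH[k * d] : Measure X)] (hk : 0 < k) (hd : 0 < d) {f : X → F} {S : Set X}
    (hS : ∀ x ∈ S, (fun y => f y - f x) =o[𝓝[S] x] fun y => dist y x ^ k) :
    μH[d] (f '' S) = 0 := by
  have hfinite (T : Set X) (hTS : T ⊆ S) (hT : μH[k * d] T ≠ ∞) : μH[d] (f '' T) = 0 := by
    have hlim : Tendsto (fun ε : ℝ≥0 => (ε : ℝ≥0∞) ^ d * μH[k * d] T) (𝓝[>] 0) (𝓝 0) := by
      have := ENNReal.Tendsto.mul_const
        (((ENNReal.continuous_rpow_const (y := d)).comp ENNReal.continuous_coe).tendsto 0)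
        (Or.inr hT)
      simpa [ENNReal.zero_rpow_of_pos hd] using this.mono_left nhdsWithin_le_nhds
    refine nonpos_iff_eq_zero.1 (ge_of_tendsto hlim (eventually_nhdsWithin_of_forall fun ε hε =>
      hausdorffMeasure_image_le_mul_of_isLittleO hk hd.le (fun x hx => ?_) hε))
    exact (hS x (hTS hx)).mono (nhdsWithin_mono _ hTS)
  rw [← inter_univ S, ← iUnion_spanningSets (μH[k * d] : Measure X), inter_iUnion, image_iUnion]
  exact measure_iUnion_null fun j => hfinite _ inter_subset_left
    ((measure_mono inter_subset_right).trans_lt (measure_spanningSets_lt_top _ j)).ne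

end HausdorffImage

section Chain

lemma abs_sub_le_of_chain {X : Type*} [PseudoMetricSpace X] {f : X → ℝ} {A : Set X} {K δ : ℝ}
    (hK : 0 ≤ K) (hA : ∀ x ∈ A, ∀ y ∈ A, dist x y < δ → |f x - f y| ≤ K * dist x y ^ 2)
    {z : ℕ → X} {T : ℕ} (hz : ∀ i ≤ T, z i ∈ A) {s : ℝ} (hs : s < δ)
    (hstep : ∀ i < T, dist (z i) (z (i + 1)) ≤ s) :
    |f (z 0) - f (z T)| ≤ T * (K * s ^ 2) := by
  calc |f (z 0) - f (z T)| = |∑ i ∈ Finset.range T, (f (z i) - f (z (i + 1)))| := by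
        rw [Finset.sum_range_sub']
    _ ≤ ∑ i ∈ Finset.range T, |f (z i) - f (z (i + 1))| := Finset.abs_sum_le_sum_abs _ _
    _ ≤ ∑ _i ∈ Finset.range T, K * s ^ 2 := Finset.sum_le_sum fun i hi => ?_
    _ = T * (K * s ^ 2) := by simp
  have hi := Finset.mem_range.1 hi
  calc |f (z i) - f (z (i + 1))| ≤ K * dist (z i) (z (i + 1)) ^ 2 :=
        hA _ (hz i hi.le) _ (hz (i + 1) hi) ((hstep i hi).trans_lt hs)
    _ ≤ K * s ^ 2 := by gcongr; exact hstep i hi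

variable {E : Type*} [NormedAddCommGroup E] [NormedSpace ℝ E]

theorem abs_sub_le_of_forall_mem_segment_inter_closedBall_nonempty {f : E → ℝ} {A : Set E}
    {K δ : ℝ} (hK : 0 ≤ K)
    (hA : ∀ x ∈ A, ∀ y ∈ A, dist x y < δ → |f x - f y| ≤ K * dist x y ^ 2) {x y : E}
    (hx : x ∈ A) (hy : y ∈ A) {T : ℕ} (hT : 0 < T) (hδ : 3 * dist x y / T < δ)
    (hnear : ∀ w ∈ segment ℝ x y, (A ∩ closedBall w (dist x y / T)).Nonempty) :
    |f x - f y| ≤ 9 * K / T * dist x y ^ 2 := by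
  set ρ := dist x y
  set w : ℕ → E := fun i => AffineMap.lineMap x y ((i : ℝ) / T)
  choose! p hp using hnear
  set z : ℕ → E := fun i => if i = 0 then x else if i = T then y else p (w i)
  have hz : ∀ i ≤ T, z i ∈ A ∧ dist (z i) (w i) ≤ ρ / T := by
    intro i hi
    simp only [z]
    split_ifs with h0 hT'
    · simp [w, h0, hx, ρ]; positivity
    · simp [w, hT', hT.ne', hy]; positivity
    · refine hp (w i) ?_
      rw [segment_eq_image_lineMap]
      exact ⟨i / T, ⟨by positivity, div_le_one_of_le₀ (by exact_mod_cast hi) (by positivity)⟩,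
        rfl⟩
  have hstep : ∀ i < T, dist (z i) (z (i + 1)) ≤ 3 * ρ / T := by
    intro i hi
    have hw : dist (w i) (w (i + 1)) = ρ / T := by
      rw [dist_lineMap_lineMap, Real.dist_eq, abs_sub_comm, Nat.cast_succ, ← sub_div,
        add_sub_cancel_left, abs_div, abs_one, Nat.abs_cast, one_div_mul_eq_div]
    calc dist (z i) (z (i + 1))
        ≤ dist (z i) (w i) + dist (w i) (w (i + 1)) + dist (w (i + 1)) (z (i + 1)) :=
          dist_triangle4 _ _ _ _
      _ ≤ ρ / T + ρ / T + ρ / T := by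
          rw [hw, dist_comm (w (i + 1))]
          gcongr
          exacts [(hz i hi.le).2, (hz (i + 1) hi).2]
      _ = 3 * ρ / T := by ring
  have hchain := abs_sub_le_of_chain hK hA (fun i hi => (hz i hi).1) hδ hstep
  simp only [z, if_pos rfl, if_neg hT.ne', if_true] at hchain
  calc |f x - f y| ≤ T * (K * (3 * ρ / T) ^ 2) := hchain
    _ = 9 * K / T * ρ ^ 2 := by field_simp; ring

end Chain

section Density

variable {E : Type*} [NormedAddCommGroup E] [NormedSpace ℝ E] [FiniteDimensional ℝ E]
  [MeasurableSpace E] [BorelSpace E] (μ : Measure E) [μ.IsAddHaarMeasure]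

theorem eventually_forall_closedBall_inter_nonempty_of_density_one {A : Set E} {x : E}
    (hx : Tendsto (fun r => μ (A ∩ closedBall x r) / μ (closedBall x r)) (𝓝[>] 0) (𝓝 1))
    {c : ℝ} (hc : 0 < c) :
    ∀ᶠ ρ in 𝓝[>] 0, ∀ z ∈ closedBall x ρ, (A ∩ closedBall z (c * ρ)).Nonempty := by
  set q : ℝ≥0∞ := ENNReal.ofReal ((c / (1 + c)) ^ Module.finrank ℝ E)
  have hq0 : q ≠ 0 := by simp only [q, ne_eq, ENNReal.ofReal_eq_zero, not_le]; positivity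
  have hq1 : q ≤ 1 :=
    ENNReal.ofReal_le_one.2 <|
      pow_le_one₀ (by positivity) ((div_le_one (by positivity)).2 (by linarith))
  have hscale : Tendsto (fun ρ => (1 + c) * ρ) (𝓝[>] 0) (𝓝[>] 0) := by
    refine tendsto_nhdsWithin_of_tendsto_nhds_of_eventually_within _ ?_ ?_
    · simpa using ((continuous_const_mul (1 + c)).tendsto 0).mono_left nhdsWithin_le_nhds
    · filter_upwards [self_mem_nhdsWithin] with ρ (hρ : 0 < ρ)
      exact mul_pos (by positivity) hρ
  filter_upwards [(hx.comp hscale).eventually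
    (lt_mem_nhds (ENNReal.sub_lt_self ENNReal.one_ne_top one_ne_zero hq0)), self_mem_nhdsWithin]
    with ρ hdense (hρ : 0 < ρ) z hz
  -- `b ⊆ B` fills the fraction `q` of `B`, so if `A` missed `b` its density in `B` were `≤ 1 - q`.
  by_contra hempty
  set B := closedBall x ((1 + c) * ρ)
  set b := closedBall z (c * ρ)
  have hbB : b ⊆ B := closedBall_subset_closedBall' (by rw [mem_closedBall] at hz; linarith)
  have hb : μ b = q * μ B := by
    rw [Measure.addHaar_closedBall μ _ (by positivity),
      Measure.addHaar_closedBall μ _ (by positivity), ← mul_assoc,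
      ← ENNReal.ofReal_mul (by positivity), ← mul_pow]
    congr 3
    field_simp
  have hB0 : μ B ≠ 0 := (measure_closedBall_pos μ x (by positivity)).ne'
  have hBtop : μ B ≠ ∞ := measure_closedBall_lt_top.ne
  have hsum : μ (A ∩ B) + μ b ≤ μ B := by
    have hdisj : Disjoint (A ∩ B) b := by
      rw [Set.disjoint_left]
      exact fun y hy hyb => hempty ⟨y, hy.1, hyb⟩
    rw [← measure_union hdisj measurableSet_closedBall]
    exact measure_mono (union_subset inter_subset_right hbB)
  have hlt : (1 - q) * μ B < μ (A ∩ B) :=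
    (ENNReal.lt_div_iff_mul_lt (Or.inl hB0) (Or.inl hBtop)).1 hdense
  refine lt_irrefl (μ B) ?_
  calc μ B = (1 - q) * μ B + q * μ B := by rw [← add_mul, tsub_add_cancel_of_le hq1, one_mul]
    _ < μ (A ∩ B) + μ b := by
        rw [hb]
        exact ENNReal.add_lt_add_right (ENNReal.mul_ne_top ENNReal.ofReal_ne_top hBtop) hlt
    _ ≤ μ B := hsum

theorem isLittleO_sub_of_density_one {f : E → ℝ} {A : Set E} {K δ : ℝ} (hK : 0 ≤ K)
    (hδ : 0 < δ) (hA : ∀ x ∈ A, ∀ y ∈ A, dist x y < δ → |f x - f y| ≤ K * dist x y ^ 2)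
    {x : E} (hxA : x ∈ A)
    (hx : Tendsto (fun r => μ (A ∩ closedBall x r) / μ (closedBall x r)) (𝓝[>] 0) (𝓝 1)) :
    (fun y => f y - f x) =o[𝓝[A] x] fun y => dist y x ^ 2 := by
  refine isLittleO_iff.2 fun ε hε => ?_
  obtain ⟨T, hT⟩ := exists_nat_gt (9 * K / ε)
  have hT0 : (0 : ℝ) < T := (by positivity : (0 : ℝ) ≤ 9 * K / ε).trans_lt hT
  obtain ⟨r, hr, hnear⟩ := (nhdsGT_basis (0 : ℝ)).eventually_iff.1
    (eventually_forall_closedBall_inter_nonempty_of_density_one μ hx (inv_pos.2 hT0))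
  filter_upwards [inter_mem_nhdsWithin A <|
    ball_mem_nhds x (lt_min hr (by positivity : 0 < δ / 3))] with y ⟨hyA, hyx⟩
  rcases eq_or_ne x y with rfl | hne
  · simp
  have hρ : 0 < dist x y := dist_pos.2 hne
  rw [mem_ball, dist_comm, lt_min_iff] at hyx
  have hchain := abs_sub_le_of_forall_mem_segment_inter_closedBall_nonempty hK hA hxA hyA
    (Nat.cast_pos.1 hT0) ?_ fun w hw => by
      simpa only [div_eq_inv_mul] using
        hnear ⟨hρ, hyx.1⟩ w (segment_subset_closedBall_left x y hw)
  · rw [Real.norm_eq_abs, norm_pow, Real.norm_eq_abs, abs_dist, abs_sub_comm, dist_comm y]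
    calc |f x - f y| ≤ 9 * K / T * dist x y ^ 2 := hchain
      _ ≤ ε * dist x y ^ 2 := by
          gcongr
          rw [div_lt_iff₀ hε] at hT
          rw [div_le_iff₀ hT0]
          linarith
  · calc 3 * dist x y / T ≤ 3 * dist x y :=
          div_le_self (by positivity) (Nat.one_le_cast.2 (Nat.cast_pos.1 hT0))
      _ < δ := by linarith

end Density

theorem volume_image_eq_zero_of_abs_sub_le_mul_dist_sq {E : Type*} [NormedAddCommGroup E]
    [NormedSpace ℝ E] [FiniteDimensional ℝ E] [MeasurableSpace E] [BorelSpace E]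
    (hE : Module.finrank ℝ E = 2) {f : E → ℝ} {A : Set E} {K δ : ℝ} (hK : 0 ≤ K) (hδ : 0 < δ)
    (hA : ∀ x ∈ A, ∀ y ∈ A, dist x y < δ → |f x - f y| ≤ K * dist x y ^ 2) :
    volume (f '' A) = 0 := by
  have : (μH[2] : Measure E).IsAddHaarMeasure := by
    simpa [hE] using isAddHaarMeasure_hausdorffMeasure (E := E)
  have : SigmaFinite (μH[(2 : ℕ) * (1 : ℝ)] : Measure E) := by norm_num; infer_instance
  set G := {x ∈ A | Tendsto (fun r => μH[2] (A ∩ closedBall x r) / μH[2] (closedBall x r))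
    (𝓝[>] 0) (𝓝 1)}
  have hGA : G ⊆ A := sep_subset _ _
  have hnull : μH[2] (A \ G) = 0 := by
    have hae := ae_iff.1 (Besicovitch.ae_tendsto_measure_inter_div (μH[2] : Measure E) A)
    refine nonpos_iff_eq_zero.1 <| (measure_mono fun x hx => ?_).trans
      ((Measure.le_restrict_apply _ _).trans_eq hae)
    exact ⟨fun h => hx.2 ⟨hx.1, h⟩, hx.1⟩
  rw [← hausdorffMeasure_real]
  refine measure_mono_null (image_mono (sdiff_union_of_subset hGA).symm.subset) ?_
  rw [image_union]
  refine measure_union_null (nonpos_iff_eq_zero.1 ?_) ?_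
  · calc μH[1] (f '' (A \ G))
        ≤ (K.toNNReal : ℝ≥0∞) ^ (1 : ℝ) * μH[(2 : ℕ) * (1 : ℝ)] (A \ G) :=
          hausdorffMeasure_image_le_of_dist_le two_pos zero_le_one hδ fun x hx y hy hxy => by
            simpa [Real.dist_eq, hK] using hA x hx.1 y hy.1 hxy
      _ = 0 := by norm_num [hnull]
  · refine hausdorffMeasure_image_eq_zero_of_isLittleO two_pos one_pos fun x hx => ?_
    exact (isLittleO_sub_of_density_one _ hK hδ hA hx.1 hx.2).mono (nhdsWithin_mono _ hGA)

section ProximalCritical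

variable {E : Type*} [NormedAddCommGroup E]

/-- The points `x` at which `0 ∈ ∂_P f x`, witnessed by the constants `σ` and `η`. -/
def proxCriticalSet (f : E → ℝ) (σ η : ℝ) : Set E :=
  {x | ∀ y ∈ ball x η, f x - σ * ‖y - x‖ ^ 2 ≤ f y}

lemma abs_sub_le_of_mem_proxCriticalSet {f : E → ℝ} {σ η : ℝ} {x y : E}
    (hx : x ∈ proxCriticalSet f σ η) (hy : y ∈ proxCriticalSet f σ η) (hxy : dist x y < η) :
    |f x - f y| ≤ σ * dist x y ^ 2 := by
  have h₁ := hx y (mem_ball.2 (by rwa [dist_comm]))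
  have h₂ := hy x (mem_ball.2 hxy)
  rw [← dist_eq_norm, dist_comm] at h₁
  rw [← dist_eq_norm] at h₂
  exact abs_sub_le_iff.2 ⟨by linarith, by linarith⟩

lemma setOf_exists_subset_iUnion_proxCriticalSet (f : E → ℝ) :
    {x | ∃ σ > (0 : ℝ), ∃ η > (0 : ℝ), x ∈ proxCriticalSet f σ η} ⊆
      ⋃ n : ℕ, proxCriticalSet f (n + 1) (1 / (n + 1)) := by
  rintro x ⟨σ, -, η, hη, hx⟩
  obtain ⟨n, hn⟩ := exists_nat_ge (max σ (1 / η))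
  refine mem_iUnion.2 ⟨n, fun y hy => ?_⟩
  have hσ : σ ≤ n + 1 := by linarith [le_max_left σ (1 / η)]
  have hnη : 1 / ((n : ℝ) + 1) ≤ η := by
    have h1 : 1 ≤ (n : ℝ) * η := (div_le_iff₀ hη).1 (le_of_max_le_right hn)
    rw [div_le_iff₀ (by positivity)]
    nlinarith
  have := hx y (ball_subset_ball hnη hy)
  nlinarith [mul_le_mul_of_nonneg_right hσ (sq_nonneg ‖y - x‖)]

end ProximalCritical

theorem morse_sard_proximal_plane_general (f : EuclideanSpace ℝ (Fin 2) → ℝ) :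
    volume (f '' {x : EuclideanSpace ℝ (Fin 2) | ∃ σ > (0 : ℝ), ∃ η > (0 : ℝ),
      ∀ y ∈ Metric.ball x η, f x - σ * ‖y - x‖ ^ 2 ≤ f y}) = 0 := by
  refine measure_mono_null (image_mono (setOf_exists_subset_iUnion_proxCriticalSet f)) ?_
  rw [image_iUnion]
  exact measure_iUnion_null fun n => volume_image_eq_zero_of_abs_sub_le_mul_dist_sq
    finrank_euclideanSpace_fin (by positivity) (by positivity)
    fun x hx y hy => abs_sub_le_of_mem_proxCriticalSet hx hy

/-- Morse-Sard for the proximal subdifferential in the plane: for every lower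
semicontinuous `f : ℝ² → ℝ`, the set `f({x : 0 ∈ ∂_P f(x)})` is Lebesgue-null,
where `0 ∈ ∂_P f(x)` iff there are `σ, η > 0` with `f(y) ≥ f(x) − σ|y−x|²`
for all `y ∈ B(x,η)`. -/
theorem morse_sard_proximal_plane (f : EuclideanSpace ℝ (Fin 2) → ℝ)
    (hf : LowerSemicontinuous f) :
    volume (f '' {x : EuclideanSpace ℝ (Fin 2) | ∃ σ > (0 : ℝ), ∃ η > (0 : ℝ),
      ∀ y ∈ Metric.ball x η, f x - σ * ‖y - x‖ ^ 2 ≤ f y}) = 0 :=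
  morse_sard_proximal_plane_general f
end
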